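/- For every natural number r ≥ 0, the inclusion ℂ[α,β] → ℂ[α,β,γ] followed by the quotient map induces an isomorphism of ℂ-algebras F̄_r = ℂ[α,β]/J̄_r ≅ ℂ[α,β,γ]/(J_r + (γ)); equivalently, the quotient F_r/γ·F_r is isomorphic to ℂ[α,β]/J̄_r. -/

import Mathlib

/-!
Setting γ = 0 is a retraction of ℂ[α,β,γ] onto ℂ[α,β] (`killCompl` along `Fin.castSucc`),
and since γ enters the recursion for (R¹, R²) only through R³_{r+1} = γ·R¹_r, it sends
R¹_r, R²_r, R³_r to R̄¹_r, R̄²_r, 0. Hence J̄_r is the image of J_r + (γ). Composing the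
retraction with the inclusion is the identity modulo (γ), so the inclusion and the retraction
descend to mutually inverse maps between ℂ[α,β]/J̄_r and ℂ[α,β,γ]/(J_r + (γ)).
-/

open MvPolynomial

/-- The triple (R¹_r, R²_r, R³_r) of polynomials in ℂ[α,β,γ] (α = X 0, β = X 1, γ = X 2). -/
noncomputable def Rr : ℕ → MvPolynomial (Fin 3) ℂ × MvPolynomial (Fin 3) ℂ × MvPolynomial (Fin 3) ℂ
  | 0 => (1, 0, 0)
  | (r + 1) =>
      (X 0 * (Rr r).1 + C ((r : ℂ) ^ 2) * (Rr r).2.1,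
       (X 1 + C ((-1 : ℂ) ^ (r + 1) * 8)) * (Rr r).1 + C ((2 * r : ℂ) / (r + 1)) * (Rr r).2.2,
       X 2 * (Rr r).1)

/-- The ideal J_r = (R¹_r, R²_r, R³_r) ⊆ ℂ[α,β,γ]. -/
noncomputable def Jr (r : ℕ) : Ideal (MvPolynomial (Fin 3) ℂ) :=
  Ideal.span {(Rr r).1, (Rr r).2.1, (Rr r).2.2}

/-- The pair (R̄¹_r, R̄²_r) of polynomials in ℂ[α,β] (α = X 0, β = X 1). -/
noncomputable def Rb : ℕ → MvPolynomial (Fin 2) ℂ × MvPolynomial (Fin 2) ℂ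
  | 0 => (1, 0)
  | (r + 1) =>
      (X 0 * (Rb r).1 + C ((r : ℂ) ^ 2) * (Rb r).2,
       (X 1 + C ((-1 : ℂ) ^ (r + 1) * 8)) * (Rb r).1)

/-- The ideal J̄_r = (R̄¹_r, R̄²_r) ⊆ ℂ[α,β]. -/
noncomputable def Jb (r : ℕ) : Ideal (MvPolynomial (Fin 2) ℂ) :=
  Ideal.span {(Rb r).1, (Rb r).2}

namespace Ideal

variable {R A B : Type*} [CommRing R] [CommRing A] [CommRing B] [Algebra R A] [Algebra R B]

noncomputable def quotientMapAlgEquivOfLeftInverse (f : A →ₐ[R] B) (g : B →ₐ[R] A)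
    (hgf : Function.LeftInverse g f) (K : Ideal B) (hfg : ∀ b, f (g b) - b ∈ K) :
    (A ⧸ K.map g) ≃ₐ[R] B ⧸ K :=
  have hmap : K.map g ≤ K.comap f :=
    map_le_iff_le_comap.mpr fun b hb => by simpa using K.add_mem (hfg b) hb
  AlgEquiv.ofAlgHom
    (Quotient.liftₐ _ ((Quotient.mkₐ R K).comp f) fun _ ha =>
      Quotient.eq_zero_iff_mem.mpr (hmap ha))
    (Quotient.liftₐ K ((Quotient.mkₐ R _).comp g) fun _ hb =>
      Quotient.eq_zero_iff_mem.mpr (mem_map_of_mem g hb))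
    (Quotient.algHom_ext R <| AlgHom.ext fun b =>
      (Quotient.mk_eq_mk_iff_sub_mem _ _).mpr (hfg b))
    (Quotient.algHom_ext R <| AlgHom.ext fun a => congrArg (Quotient.mk _) (hgf a))

@[simp]
theorem quotientMapAlgEquivOfLeftInverse_mk (f : A →ₐ[R] B) (g : B →ₐ[R] A)
    (hgf : Function.LeftInverse g f) (K : Ideal B) (hfg : ∀ b, f (g b) - b ∈ K) (a : A) :
    quotientMapAlgEquivOfLeftInverse f g hgf K hfg (Quotient.mk _ a) = Quotient.mk K (f a) :=
  rfl

end Ideal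

namespace MvPolynomial

variable {R σ τ : Type*} [CommRing R] {f : σ → τ} (hf : Function.Injective f)

theorem killCompl_X_of_notMem_range {j : τ} (hj : j ∉ Set.range f) :
    killCompl (R := R) hf (X j) = 0 := by
  simp [killCompl, hj]

theorem killCompl_X (i : σ) : killCompl (R := R) hf (X (f i)) = X i := by
  simpa using killCompl_rename_app hf (X i)

theorem rename_killCompl_sub_mem {K : Ideal (MvPolynomial τ R)}
    (hK : ∀ j ∉ Set.range f, X j ∈ K) (p : MvPolynomial τ R) :
    rename f (killCompl hf p) - p ∈ K := by
  have : (Ideal.Quotient.mkₐ R K).comp ((rename f).comp (killCompl hf)) =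
      Ideal.Quotient.mkₐ R K := by
    refine algHom_ext fun j => ?_
    by_cases hj : j ∈ Set.range f
    · obtain ⟨i, rfl⟩ := hj
      simp [killCompl_X]
    · simpa [killCompl_X_of_notMem_range hf hj] using
        (Ideal.Quotient.eq_zero_iff_mem.mpr (hK j hj)).symm
  exact (Ideal.Quotient.mk_eq_mk_iff_sub_mem _ _).mp (AlgHom.congr_fun this p)

theorem killCompl_castSucc_X_last (n : ℕ) :
    killCompl (R := R) (Fin.castSucc_injective n) (X (Fin.last n)) = 0 :=
  killCompl_X_of_notMem_range _ fun ⟨i, hi⟩ => Fin.castSucc_ne_last i hi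

end MvPolynomial

theorem killCompl_castSucc_Rr (r : ℕ) :
    killCompl (Fin.castSucc_injective 2) (Rr r).1 = (Rb r).1 ∧
      killCompl (Fin.castSucc_injective 2) (Rr r).2.1 = (Rb r).2 ∧
      killCompl (Fin.castSucc_injective 2) (Rr r).2.2 = 0 := by
  have hα : killCompl (Fin.castSucc_injective 2) (X 0 : MvPolynomial (Fin 3) ℂ) = X 0 :=
    killCompl_X _ 0
  have hβ : killCompl (Fin.castSucc_injective 2) (X 1 : MvPolynomial (Fin 3) ℂ) = X 1 :=
    killCompl_X _ 1
  have hγ : killCompl (Fin.castSucc_injective 2) (X 2 : MvPolynomial (Fin 3) ℂ) = 0 :=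
    killCompl_castSucc_X_last 2
  induction r with
  | zero => simp [Rr, Rb]
  | succ r ih =>
    obtain ⟨ih1, ih2, ih3⟩ := ih
    simp [Rr, Rb, hα, hβ, hγ, ih1, ih2, ih3]

theorem Jb_eq_map_killCompl (r : ℕ) :
    Jb r = (Jr r ⊔ Ideal.span {X 2}).map (killCompl (Fin.castSucc_injective 2)) := by
  obtain ⟨h1, h2, h3⟩ := killCompl_castSucc_Rr r
  have hγ : killCompl (Fin.castSucc_injective 2) (X 2 : MvPolynomial (Fin 3) ℂ) = 0 :=
    killCompl_castSucc_X_last 2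
  rw [Jr, Jb, Ideal.map_sup, Ideal.map_span, Ideal.map_span]
  simp [Set.image_insert_eq, Ideal.span_insert, h1, h2, h3, hγ]

/-- For every r ≥ 0, the inclusion ℂ[α,β] → ℂ[α,β,γ] (given by renaming along
Fin.castSucc : Fin 2 → Fin 3, i.e. α ↦ α, β ↦ β) followed by the quotient map induces an
isomorphism of ℂ-algebras ℂ[α,β]/J̄_r ≅ ℂ[α,β,γ]/(J_r + (γ)). -/
theorem stmt3 (r : ℕ) :
    ∃ e : (MvPolynomial (Fin 2) ℂ ⧸ Jb r) ≃ₐ[ℂ]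
        (MvPolynomial (Fin 3) ℂ ⧸ (Jr r ⊔ Ideal.span {X 2})),
      ∀ p : MvPolynomial (Fin 2) ℂ,
        e (Ideal.Quotient.mk (Jb r) p) =
          Ideal.Quotient.mk (Jr r ⊔ Ideal.span {X 2}) (rename Fin.castSucc p) := by
  have hK : ∀ j ∉ Set.range Fin.castSucc,
      (X j : MvPolynomial (Fin 3) ℂ) ∈ Jr r ⊔ Ideal.span {X 2} := by
    intro j hj
    obtain rfl : j = Fin.last 2 := not_ne_iff.mp (mt Fin.exists_castSucc_eq.mpr hj)
    exact Ideal.mem_sup_right (Ideal.mem_span_singleton_self _)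
  refine ⟨(Ideal.quotientEquivAlgOfEq ℂ (Jb_eq_map_killCompl r)).trans
    (Ideal.quotientMapAlgEquivOfLeftInverse (rename Fin.castSucc)
      (killCompl (Fin.castSucc_injective 2)) (killCompl_rename_app _) _
      (rename_killCompl_sub_mem _ hK)), fun p => ?_⟩
  simp only [AlgEquiv.trans_apply, Ideal.quotientEquivAlgOfEq_mk,
    Ideal.quotientMapAlgEquivOfLeftInverse_mk]
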